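/- Let c be a prime of the form m^2 + 1 with m = 2^e, e ≥ 1, and β = m + i ∈ ℤ[i]. Suppose a odd, b even are coprime positive integers and X', Y', Z positive integers with a^{2X'} + b^{2Y'} = c^Z. Then Y'·ν_2(b) = e + ν_2(Z). -/

import Mathlib

/-!
Put `ρ = 1 + m i` (that is `i · conj β`); its norm is the prime `c`, so `ρ` is a Gaussian
prime not dividing `2`. Since `a^X'` and `b^Y'` are coprime, `ρ` cannot divide both
`w = a^X' + b^Y' i` and `conj w`, so `ρ^Z` divides one of them, and comparing norms gives
`w` or `conj w` `= u ρ^Z` with `u` a unit. The real part of `ρ^Z` is odd, so the parity of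
`b` forces `u = ±1` and `b^Y' = |Im ρ^Z|`. Finally `Im ρ^Z = 2^(ν₂ Z) · m · (odd)`: odd
powers of `1 + m i` have odd real part and imaginary part `m · (odd)`, and squaring `x + y i`
with `x` odd keeps the real part odd and raises `ν₂` of the imaginary part `2xy` by one.
-/

open Zsqrtd

lemma Zsqrtd.norm_pow {d : ℤ} (z : ℤ√d) (n : ℕ) : (z ^ n).norm = z.norm ^ n :=
  map_pow normMonoidHom z n

lemma Zsqrtd.irreducible_of_prime_natAbs_norm {d : ℤ} {z : ℤ√d} (h : z.norm.natAbs.Prime) :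
    Irreducible z := by
  let f : ℤ√d →* ℕ := Int.natAbsHom.toMonoidHom.comp normMonoidHom
  have : IsLocalHom f := ⟨fun x hx => norm_eq_one_iff.mp (Nat.isUnit_iff.mp hx)⟩
  exact Irreducible.of_map (f := f) h

lemma padicValNat_two_pow_mul_of_odd {k m : ℕ} (hm : Odd m) : padicValNat 2 (2 ^ k * m) = k := by
  rw [padicValNat.mul (by positivity) (by rintro rfl; simp at hm), padicValNat.prime_pow,
    padicValNat.eq_zero_of_not_dvd hm.not_two_dvd_nat, add_zero]

namespace GaussianInt

lemma dvd_two_of_dvd_of_dvd_star {π w : GaussianInt} (hw : IsCoprime w.re w.im) (h : π ∣ w)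
    (h' : π ∣ star w) : π ∣ 2 := by
  obtain ⟨u, v, huv⟩ := hw
  have htwo : (2 : GaussianInt) = u * (w + star w) + v * ⟨0, -1⟩ * (w - star w) := by
    ext
    · simp [re_mul]
      linear_combination (-2) * huv
    · simp [im_mul]
  rw [htwo]
  exact dvd_add (dvd_mul_of_dvd_right (dvd_add h h') _) (dvd_mul_of_dvd_right (dvd_sub h h') _)

lemma not_dvd_two_of_four_lt_norm {π : GaussianInt} (h : 4 < π.norm) : ¬π ∣ 2 := by
  rintro ⟨t, ht⟩
  have : π.norm ∣ 4 := ⟨t.norm, by rw [← Zsqrtd.norm_mul, ← ht]; rfl⟩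
  exact (Int.le_of_dvd (by norm_num) this).not_gt h

lemma pow_dvd_or_pow_dvd_star {π w : GaussianInt} (hπ : Prime π) (h2 : ¬π ∣ 2)
    (hw : IsCoprime w.re w.im) {n : ℕ} (h : π ^ n ∣ w * star w) :
    π ^ n ∣ w ∨ π ^ n ∣ star w := by
  by_cases hs : π ∣ star w
  · have hw' : ¬π ∣ w := fun hw' => h2 (dvd_two_of_dvd_of_dvd_star hw hw' hs)
    exact .inr (hπ.pow_dvd_of_dvd_mul_left n hw' h)
  · exact .inl (hπ.pow_dvd_of_dvd_mul_right n hs h)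

lemma exists_norm_eq_one_and_pow_mul_eq {π w : GaussianInt} (hπ : Prime π) (h2 : ¬π ∣ 2)
    (hw : IsCoprime w.re w.im) {n : ℕ} (hnorm : w.norm = π.norm ^ n) :
    ∃ u : GaussianInt, u.norm = 1 ∧ (π ^ n * u = w ∨ π ^ n * u = star w) := by
  have hdvd : π ^ n ∣ w * star w := ⟨star π ^ n, by
    rw [← mul_pow, ← norm_eq_mul_conj, ← norm_eq_mul_conj, hnorm]; push_cast; rfl⟩
  have hcofactor : ∀ v : GaussianInt, v.norm = π.norm ^ n → π ^ n ∣ v →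
      ∃ u : GaussianInt, u.norm = 1 ∧ π ^ n * u = v := by
    rintro v hv ⟨u, rfl⟩
    rw [Zsqrtd.norm_mul, Zsqrtd.norm_pow] at hv
    have hπ_norm : π.norm ≠ 0 := norm_eq_zero.not.mpr hπ.ne_zero
    exact ⟨u, (mul_eq_left₀ (pow_ne_zero n hπ_norm)).mp hv, rfl⟩
  rcases pow_dvd_or_pow_dvd_star hπ h2 hw hdvd with h | h
  · obtain ⟨u, hu, hπu⟩ := hcofactor w hnorm h
    exact ⟨u, hu, .inl hπu⟩
  · obtain ⟨u, hu, hπu⟩ := hcofactor (star w) (by rw [norm_conj, hnorm]) h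
    exact ⟨u, hu, .inr hπu⟩

lemma natAbs_im_mul_of_norm_eq_one {z u : GaussianInt} (hu : u.norm = 1) (hre : Odd z.re)
    (him : Even z.im) (h : Even (z * u).im) : (z * u).im.natAbs = z.im.natAbs := by
  rw [norm_def] at hu
  rw [im_mul] at h ⊢
  have hu_im : Even u.im := by
    have : Even (z.re * u.im) := by simpa using h.sub (him.mul_right u.re)
    exact (Int.even_mul.mp this).resolve_left (Int.not_even_iff_odd.mpr hre)
  have hu_im0 : u.im = 0 := by
    obtain ⟨t, ht⟩ := hu_im
    rw [ht] at hu
    have : t * t < 1 := by nlinarith [mul_self_nonneg u.re]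
    nlinarith [mul_self_nonneg u.re]
  have hu_re : u.re.natAbs = 1 :=
    Int.isUnit_iff_natAbs_eq.mp (IsUnit.of_mul_eq_one _ (by simpa [hu_im0] using hu))
  simp [hu_im0, Int.natAbs_mul, hu_re]

lemma sq_re_odd_and_im_eq {M : ℤ} (hM : Even M) {z : GaussianInt} {k : ℕ} {r : ℤ}
    (hre : Odd z.re) (hr : Odd r) (him : z.im = 2 ^ k * M * r) :
    Odd (z ^ 2).re ∧ ∃ s, Odd s ∧ (z ^ 2).im = 2 ^ (k + 1) * M * s := by
  refine ⟨?_, z.re * r, hre.mul hr, ?_⟩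
  · rw [sq, re_mul, him]
    simp [parity_simps, hre, hM]
  · rw [sq, im_mul, him]
    ring

lemma odd_pow_re_odd_and_im_eq {M : ℤ} (hM : Even M) (j : ℕ) :
    Odd ((⟨1, M⟩ : GaussianInt) ^ (2 * j + 1)).re ∧
      ∃ r, Odd r ∧ ((⟨1, M⟩ : GaussianInt) ^ (2 * j + 1)).im = M * r := by
  induction j with
  | zero => exact ⟨by simp, 1, odd_one, by simp⟩
  | succ j ih =>
    obtain ⟨hre, r, hr, him⟩ := ih
    rw [show 2 * (j + 1) + 1 = 2 * j + 1 + 1 + 1 by ring, pow_succ, pow_succ]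
    refine ⟨?_, 2 * ((⟨1, M⟩ : GaussianInt) ^ (2 * j + 1)).re + (1 - M * M) * r, ?_, ?_⟩
    · simp only [re_mul, im_mul, him]
      simp [parity_simps, hre, hM]
    · exact (even_two_mul _).add_odd ((odd_one.sub_even (hM.mul_right M)).mul hr)
    · simp only [re_mul, im_mul, him]
      ring

lemma pow_re_odd_and_im_eq {M : ℤ} (hM : Even M) {n : ℕ} (hn : n ≠ 0) :
    Odd ((⟨1, M⟩ : GaussianInt) ^ n).re ∧
      ∃ r, Odd r ∧ ((⟨1, M⟩ : GaussianInt) ^ n).im = 2 ^ padicValNat 2 n * M * r := by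
  obtain ⟨k, j, hj, rfl⟩ := Nat.exists_eq_two_pow_mul_odd hn
  rw [padicValNat_two_pow_mul_of_odd hj]
  obtain ⟨j, rfl⟩ := hj
  clear hn
  induction k with
  | zero => simpa using odd_pow_re_odd_and_im_eq hM j
  | succ k ih =>
    obtain ⟨hre, r, hr, him⟩ := ih
    rw [pow_succ, mul_comm _ 2, mul_assoc, pow_mul']
    exact sq_re_odd_and_im_eq hM hre hr him

end GaussianInt

theorem stmt_14_general (e : ℕ) (he : 1 ≤ e) (m c : ℕ) (hm : m = 2 ^ e)
    (hc : c = m ^ 2 + 1) (hcp : c.Prime)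
    (a b : ℕ) (hab : Nat.Coprime a b)
    (hbeven : Even b)
    (X' Y' Z : ℕ) (hY' : 0 < Y') (hZ : 0 < Z)
    (heq : a ^ (2 * X') + b ^ (2 * Y') = c ^ Z) :
    Y' * padicValNat 2 b = e + padicValNat 2 Z := by
  set ρ : GaussianInt := ⟨1, 2 ^ e⟩
  set w : GaussianInt := ⟨a ^ X', b ^ Y'⟩
  have hρ_norm : ρ.norm = c := by simp [norm_def, ρ, hc, hm]; ring
  have hρ : Prime ρ :=
    (irreducible_of_prime_natAbs_norm (by rwa [hρ_norm, Int.natAbs_natCast])).prime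
  have hρ_two : ¬ρ ∣ 2 := by
    have : 2 ^ 1 ≤ m := hm ▸ Nat.pow_le_pow_right two_pos he
    exact GaussianInt.not_dvd_two_of_four_lt_norm (by rw [hρ_norm]; nlinarith)
  have hw : IsCoprime w.re w.im := by simpa using Nat.isCoprime_iff_coprime.mpr (hab.pow X' Y')
  have hw_norm : w.norm = ρ.norm ^ Z := by
    have heq' := congrArg (Nat.cast : ℕ → ℤ) heq
    push_cast at heq'
    rw [hρ_norm]
    simp only [norm_def, w]
    linear_combination heq'
  obtain ⟨u, hu, hρw⟩ := GaussianInt.exists_norm_eq_one_and_pow_mul_eq hρ hρ_two hw hw_norm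
  have hb_pow : (ρ ^ Z * u).im.natAbs = b ^ Y' := by rcases hρw with h | h <;> simp [h, w]
  have hM : Even (2 ^ e : ℤ) := Int.even_pow.mpr ⟨even_two, by omega⟩
  obtain ⟨hre, r, hr, him⟩ := GaussianInt.pow_re_odd_and_im_eq hM hZ.ne'
  have hb_pow_even : Even (ρ ^ Z * u).im := by
    rw [← Int.natAbs_even, hb_pow]; exact Nat.even_pow.mpr ⟨hbeven, hY'.ne'⟩
  rw [GaussianInt.natAbs_im_mul_of_norm_eq_one hu hre (him ▸ (hM.mul_left _).mul_right r)
    hb_pow_even, him] at hb_pow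
  have hb_pow' : b ^ Y' = 2 ^ (padicValNat 2 Z + e) * r.natAbs := by
    rw [← hb_pow]; simp [Int.natAbs_mul, pow_add]
  rw [← padicValNat.pow, hb_pow', padicValNat_two_pow_mul_of_odd (Int.natAbs_odd.mpr hr)]
  omega

theorem stmt_14 (e : ℕ) (he : 1 ≤ e) (m c : ℕ) (hm : m = 2 ^ e)
    (hc : c = m ^ 2 + 1) (hcp : c.Prime)
    (a b : ℕ) (ha : 0 < a) (hb : 0 < b) (hab : Nat.Coprime a b)
    (haodd : Odd a) (hbeven : Even b)
    (X' Y' Z : ℕ) (hX' : 0 < X') (hY' : 0 < Y') (hZ : 0 < Z)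
    (heq : a ^ (2 * X') + b ^ (2 * Y') = c ^ Z) :
    Y' * padicValNat 2 b = e + padicValNat 2 Z :=
  stmt_14_general e he m c hm hc hcp a b hab hbeven X' Y' Z hY' hZ heq
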